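/- Let U ⊆ ℝⁿ be open, β ∈ ℝ, ε > 0, and v : U → ℝ smooth. Then pointwise in U: σ₂(D[(|Dv|² + ε)^{β/2} Dv]) = (1/2)(|Dv|² + ε)^β (|D²v|² − (Δv)²) + β (|Dv|² + ε)^{β−1} (|D²v Dv|² − Δv · Δ_∞v). -/

import Mathlib

open Finset

/-- Partial derivative `∂f/∂xᵢ` at `x`. -/
noncomputable def pder {n : ℕ} (f : (Fin n → ℝ) → ℝ) (x : Fin n → ℝ) (i : Fin n) : ℝ :=
  fderiv ℝ f x (Pi.single i 1)

/-- Gradient `Dv`. -/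
noncomputable def grad {n : ℕ} (v : (Fin n → ℝ) → ℝ) (x : Fin n → ℝ) : Fin n → ℝ :=
  fun i => pder v x i

/-- Hessian `D²v`. -/
noncomputable def hess {n : ℕ} (v : (Fin n → ℝ) → ℝ) (x : Fin n → ℝ) : Fin n → Fin n → ℝ :=
  fun i j => pder (fun y => pder v y j) x i

/-- The vector field `x ↦ (|Dv(x)|² + ε)^{β/2} Dv(x)`. -/
noncomputable def regField {n : ℕ} (β ε : ℝ) (v : (Fin n → ℝ) → ℝ)
    (y : Fin n → ℝ) (i : Fin n) : ℝ :=
  ((∑ k : Fin n, grad v y k ^ 2) + ε) ^ (β / 2) * grad v y i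

/-- Jacobian matrix of the vector field, entry `(i,j) = ∂_{x_j} Fᵢ`. -/
noncomputable def regJac {n : ℕ} (β ε : ℝ) (v : (Fin n → ℝ) → ℝ)
    (x : Fin n → ℝ) : Matrix (Fin n) (Fin n) ℝ :=
  Matrix.of fun i j => pder (fun y => regField β ε v y i) x j

/-- `σ₂(M) = -∑_{1≤i<j≤n} (m_{ii} m_{jj} - m_{ij} m_{ji})`. -/
def sigma2 {n : ℕ} (M : Matrix (Fin n) (Fin n) ℝ) : ℝ :=
  -∑ i : Fin n, ∑ j : Fin n, if i < j then M i i * M j j - M i j * M j i else 0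

lemma hasFDerivAt_pder {n : ℕ} {v : (Fin n → ℝ) → ℝ} {x : Fin n → ℝ}
    (hvx : ContDiffAt ℝ 2 v x) (k : Fin n) :
    HasFDerivAt (fun y => pder v y k)
      ((fderiv ℝ (fderiv ℝ v) x).flip (Pi.single k 1)) x := by
  have hd : DifferentiableAt ℝ (fderiv ℝ v) x :=
    (hvx.fderiv_right (m := 1) (by norm_num)).differentiableAt one_ne_zero
  have h := hd.hasFDerivAt.clm_apply (hasFDerivAt_const (Pi.single k 1) x)
  simpa [pder] using h

lemma hess_eq' {n : ℕ} {v : (Fin n → ℝ) → ℝ} {x : Fin n → ℝ}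
    (hvx : ContDiffAt ℝ 2 v x) (i j : Fin n) :
    hess v x i j = fderiv ℝ (fderiv ℝ v) x (Pi.single i 1) (Pi.single j 1) := by
  have h := (hasFDerivAt_pder hvx j).fderiv
  show pder (fun y => pder v y j) x i = _
  simp only [pder] at h ⊢
  rw [h, ContinuousLinearMap.flip_apply]

lemma hess_symm {n : ℕ} {v : (Fin n → ℝ) → ℝ} {x : Fin n → ℝ}
    (hvx : ContDiffAt ℝ 2 v x) (i j : Fin n) :
    hess v x i j = hess v x j i := by
  rw [hess_eq' hvx, hess_eq' hvx, hvx.isSymmSndFDerivAt (by simp [minSmoothness_of_isRCLikeNormedField])]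

lemma regJac_entry {n : ℕ} (β ε : ℝ) {v : (Fin n → ℝ) → ℝ} {x : Fin n → ℝ}
    (hε : 0 < ε) (hvx : ContDiffAt ℝ 2 v x) (i j : Fin n) :
    regJac β ε v x i j
      = ((∑ k : Fin n, grad v x k ^ 2) + ε) ^ (β / 2) * hess v x j i
        + β * ((∑ k : Fin n, grad v x k ^ 2) + ε) ^ (β / 2 - 1)
          * (∑ k : Fin n, hess v x j k * grad v x k) * grad v x i := by
  have hg : ∀ k, HasFDerivAt (fun y => pder v y k)
      ((fderiv ℝ (fderiv ℝ v) x).flip (Pi.single k 1)) x := fun k => hasFDerivAt_pder hvx k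
  have hSpos : (0:ℝ) < (∑ k : Fin n, pder v x k ^ 2) + ε := by positivity
  have hsum : HasFDerivAt (fun y => (∑ k : Fin n, pder v y k ^ 2) + ε)
      (∑ k : Fin n, (2 * pder v x k) • (fderiv ℝ (fderiv ℝ v) x).flip (Pi.single k 1)) x := by
    refine (HasFDerivAt.fun_sum fun k _ => ?_).add_const ε
    simp only [pow_two, two_mul, add_smul]
    exact (hg k).mul (hg k)
  have hr := hsum.rpow_const (p := β / 2) (Or.inl hSpos.ne')
  have hmul := hr.mul (hg i)
  have hfd : fderiv ℝ (fun y => regField β ε v y i) x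
      = (((∑ k : Fin n, pder v x k ^ 2) + ε) ^ (β / 2)) •
          ((fderiv ℝ (fderiv ℝ v) x).flip (Pi.single i 1))
        + (pder v x i) •
          ((β / 2 * ((∑ k : Fin n, pder v x k ^ 2) + ε) ^ (β / 2 - 1)) •
            (∑ k : Fin n, (2 * pder v x k) • (fderiv ℝ (fderiv ℝ v) x).flip (Pi.single k 1))) :=
    hmul.fderiv
  show pder (fun y => regField β ε v y i) x j = _
  rw [pder, hfd]
  have hflip : ∀ a b : Fin n, ((fderiv ℝ (fderiv ℝ v) x).flip (Pi.single b 1)) (Pi.single a 1)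
      = hess v x a b := by
    intro a b; rw [hess_eq' hvx, ContinuousLinearMap.flip_apply]
  simp only [ContinuousLinearMap.add_apply, ContinuousLinearMap.smul_apply,
    ContinuousLinearMap.coe_sum', Finset.sum_apply, hflip, smul_eq_mul]
  have hG : ∀ k, grad v x k = pder v x k := fun k => rfl
  simp only [hG]
  rw [show (∑ k : Fin n, 2 * pder v x k * hess v x j k)
      = 2 * ∑ k : Fin n, hess v x j k * pder v x k from by
    rw [Finset.mul_sum]; exact Finset.sum_congr rfl fun k _ => by ring]
  ring

lemma sigma2_eq_half {n : ℕ} (M : Matrix (Fin n) (Fin n) ℝ) :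
    sigma2 M = (1/2) * ((∑ i : Fin n, ∑ j : Fin n, M i j * M j i) - (∑ i : Fin n, M i i)^2) := by
  have hsq : (∑ i : Fin n, M i i)^2 = ∑ i : Fin n, ∑ j : Fin n, M i i * M j j := by
    rw [sq, Finset.sum_mul_sum]
  have key : (∑ i : Fin n, ∑ j : Fin n, if i < j then M i i * M j j - M i j * M j i else 0) * 2
      = ∑ i : Fin n, ∑ j : Fin n, (M i i * M j j - M i j * M j i) := by
    have h2 : (∑ i : Fin n, ∑ j : Fin n, if i < j then M i i * M j j - M i j * M j i else 0)
        = ∑ i : Fin n, ∑ j : Fin n, if j < i then M i i * M j j - M i j * M j i else 0 := by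
      rw [Finset.sum_comm]
      refine Finset.sum_congr rfl fun i _ => Finset.sum_congr rfl fun j _ => ?_
      by_cases h : j < i
      · simp [h]; ring
      · simp [h]
    rw [mul_two]
    nth_rewrite 2 [h2]
    rw [← Finset.sum_add_distrib]
    refine Finset.sum_congr rfl fun i _ => ?_
    rw [← Finset.sum_add_distrib]
    refine Finset.sum_congr rfl fun j _ => ?_
    rcases lt_trichotomy i j with h | h | h
    · simp [h, lt_asymm h]
    · subst h; simp
    · simp [h, lt_asymm h]
  simp only [sigma2]
  rw [hsq]
  have split : (∑ i : Fin n, ∑ j : Fin n, (M i i * M j j - M i j * M j i))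
      = (∑ i : Fin n, ∑ j : Fin n, M i i * M j j) - ∑ i : Fin n, ∑ j : Fin n, M i j * M j i := by
    simp [Finset.sum_sub_distrib]
  rw [split] at key
  linarith [key]

/-- The algebraic structural identity for `σ₂` (Lemma 2.2). -/
theorem sigma2_structural_identity (n : ℕ) (U : Set (Fin n → ℝ)) (hU : IsOpen U)
    (β ε : ℝ) (hε : 0 < ε)
    (v : (Fin n → ℝ) → ℝ) (hv : ContDiffOn ℝ (⊤ : ℕ∞) v U) :
    ∀ x ∈ U,
      sigma2 (regJac β ε v x)
        = (1 / 2) * ((∑ i : Fin n, grad v x i ^ 2) + ε) ^ β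
            * ((∑ i : Fin n, ∑ j : Fin n, hess v x i j ^ 2)
                - (∑ i : Fin n, hess v x i i) ^ 2)
          + β * ((∑ i : Fin n, grad v x i ^ 2) + ε) ^ (β - 1)
            * ((∑ i : Fin n, (∑ j : Fin n, hess v x i j * grad v x j) ^ 2)
                - (∑ i : Fin n, hess v x i i)
                    * (∑ i : Fin n, ∑ j : Fin n, hess v x i j * grad v x i * grad v x j)) := by
  intro x hx
  have hvx : ContDiffAt ℝ 2 v x := (hv.contDiffAt (hU.mem_nhds hx)).of_le (WithTop.coe_le_coe.mpr le_top)
  set G : Fin n → ℝ := grad v x with hGdef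
  set H : Fin n → Fin n → ℝ := hess v x with hHdef
  have hsym : ∀ i j, H i j = H j i := fun i j => hess_symm hvx i j
  set S : ℝ := (∑ k : Fin n, G k ^ 2) + ε with hSdef
  have hSpos : (0:ℝ) < S := by positivity
  set A : ℝ := S ^ (β / 2) with hAdef
  set B : ℝ := β * S ^ (β / 2 - 1) with hBdef
  set P : Fin n → ℝ := fun i => ∑ k : Fin n, H i k * G k with hPdef
  have hJ : ∀ i j, regJac β ε v x i j = A * H i j + B * P j * G i := by
    intro i j
    rw [regJac_entry β ε hε hvx i j, hess_symm hvx j i]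
  rw [sigma2_eq_half]
  simp only [hJ]
  -- sum identities
  have t1 : (∑ i : Fin n, ∑ j : Fin n, H i j * H j i) = ∑ i : Fin n, ∑ j : Fin n, H i j ^ 2 := by
    refine Finset.sum_congr rfl fun i _ => Finset.sum_congr rfl fun j _ => ?_
    rw [← hsym i j, sq]
  have t2 : (∑ i : Fin n, ∑ j : Fin n, H i j * G j * P i) = ∑ i : Fin n, P i ^ 2 := by
    refine Finset.sum_congr rfl fun i _ => ?_
    rw [← Finset.sum_mul]
    show P i * P i = P i ^ 2
    rw [sq]
  have t3 : (∑ i : Fin n, ∑ j : Fin n, H j i * G i * P j) = ∑ i : Fin n, P i ^ 2 := by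
    rw [Finset.sum_comm]; exact t2
  have t4 : (∑ i : Fin n, (P i * G i * ∑ j : Fin n, P j * G j))
      = (∑ i : Fin n, P i * G i) ^ 2 := by
    rw [← Finset.sum_mul, sq]
  have e1 : (∑ i : Fin n, ∑ j : Fin n,
        (A * H i j + B * P j * G i) * (A * H j i + B * P i * G j))
      = A * A * (∑ i : Fin n, ∑ j : Fin n, H i j ^ 2)
        + 2 * (A * B) * (∑ i : Fin n, P i ^ 2)
        + B * B * (∑ i : Fin n, P i * G i) ^ 2 := by
    have expand : ∀ i j : Fin n, (A * H i j + B * P j * G i) * (A * H j i + B * P i * G j)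
        = A * A * (H i j * H j i) + ((A * B) * (H i j * G j * P i)
          + ((A * B) * (H j i * G i * P j) + (B * B) * ((P i * G i) * (P j * G j)))) := by
      intro i j; ring
    rw [Finset.sum_congr rfl fun i _ => Finset.sum_congr rfl fun j _ => expand i j]
    simp only [Finset.sum_add_distrib, ← Finset.mul_sum]
    rw [t1, t2, t3, t4]
    ring
  have e2 : (∑ i : Fin n, (A * H i i + B * P i * G i))
      = A * (∑ i : Fin n, H i i) + B * (∑ i : Fin n, P i * G i) := by
    simp only [mul_assoc]
    rw [Finset.sum_add_distrib, ← Finset.mul_sum, ← Finset.mul_sum]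
  rw [e1, e2]
  have hP2 : (∑ i : Fin n, (∑ j : Fin n, H i j * G j) ^ 2) = ∑ i : Fin n, P i ^ 2 := rfl
  have hQ : (∑ i : Fin n, ∑ j : Fin n, H i j * G i * G j) = ∑ i : Fin n, P i * G i := by
    refine Finset.sum_congr rfl fun i _ => ?_
    show ∑ j : Fin n, H i j * G i * G j = P i * G i
    rw [show P i = ∑ k : Fin n, H i k * G k from rfl, Finset.sum_mul]
    exact Finset.sum_congr rfl fun j _ => by ring
  rw [hP2, hQ]
  have hA2 : A * A = S ^ β := by
    rw [hAdef, ← Real.rpow_add hSpos]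
    norm_num
  have hAB : A * B = β * S ^ (β - 1) := by
    have h := Real.rpow_add hSpos (β / 2) (β / 2 - 1)
    have h2 : β / 2 + (β / 2 - 1) = β - 1 := by ring
    rw [hAdef, hBdef, ← h2, h]
    ring
  rw [← hA2, ← hAB]
  ring
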